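/- arXiv:1705.02031 — 2 statements merged into one kernel-verified Lean document; each statement's English description precedes it below -/
import Mathlib

section
/- With adaptive stepsizes h_k = R / sqrt(∑_{i=1}^k M_i²) where M_i > 0 and R > 0, it holds that R²/h_N + ∑_{k=1}^N (h_k M_k²)/2 ≤ 2R * sqrt(∑_{k=1}^N M_k²). -/
open Finset in
lemma adaptive_sum_le (g : ℕ → ℝ) (hg : ∀ i, 0 ≤ g i) :
    ∀ n, ∑ k ∈ range n, g k / Real.sqrt (∑ i ∈ range (k + 1), g i)
      ≤ 2 * Real.sqrt (∑ i ∈ range n, g i) := by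
  intro n
  induction n with
  | zero => simp
  | succ n ih =>
    rw [Finset.sum_range_succ]
    set a := Real.sqrt (∑ i ∈ range n, g i) with ha
    set b := Real.sqrt (∑ i ∈ range (n + 1), g i) with hb
    have hAn : (0:ℝ) ≤ ∑ i ∈ range n, g i := Finset.sum_nonneg fun i _ => hg i
    have hAn1 : (0:ℝ) ≤ ∑ i ∈ range (n + 1), g i := Finset.sum_nonneg fun i _ => hg i
    have hstep : ∑ i ∈ range (n + 1), g i = (∑ i ∈ range n, g i) + g n :=
      Finset.sum_range_succ g n
    have hab : a ≤ b := Real.sqrt_le_sqrt (by rw [hstep]; linarith [hg n])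
    have ha0 : 0 ≤ a := Real.sqrt_nonneg _
    have ha2 : a ^ 2 = ∑ i ∈ range n, g i := Real.sq_sqrt hAn
    have hb2 : b ^ 2 = ∑ i ∈ range (n + 1), g i := Real.sq_sqrt hAn1
    rcases eq_or_lt_of_le (Real.sqrt_nonneg (∑ i ∈ range (n + 1), g i)) with hb0 | hb0
    · have hbz : b = 0 := by rw [hb, ← hb0]
      rw [hbz, div_zero]
      linarith [ih, hab]
    · have key : g n / b ≤ 2 * b - 2 * a := by
        rw [div_le_iff₀ hb0]
        have hgn : g n = b ^ 2 - a ^ 2 := by rw [ha2, hb2, hstep]; ring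
        nlinarith [sq_nonneg (b - a)]
      linarith [ih]

theorem adaptive_stepsize_total_bound (N : ℕ) (hN : 0 < N) (R : ℝ) (hR : 0 < R)
    (M : Fin N → ℝ) (hM : ∀ k, 0 < M k)
    (h : Fin N → ℝ)
    (hdef : ∀ k, h k = R / Real.sqrt (∑ i ∈ Finset.Iic k, M i ^ 2)) :
    R ^ 2 / h ⟨N - 1, by omega⟩ + ∑ k : Fin N, h k * M k ^ 2 / 2
      ≤ 2 * R * Real.sqrt (∑ k : Fin N, M k ^ 2) := by
  classical
  set g : ℕ → ℝ := fun i => if hi : i < N then M ⟨i, hi⟩ ^ 2 else 0 with hgdef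
  have hg : ∀ i, 0 ≤ g i := by
    intro i
    simp only [hgdef]
    split
    · positivity
    · exact le_refl 0
  have hgpos : ∀ i (hi : i < N), 0 < g i := by
    intro i hi
    simp only [hgdef, dif_pos hi]
    exact pow_pos (hM _) 2
  -- Iic sum equals range sum
  have hIic : ∀ k : Fin N, ∑ i ∈ Finset.Iic k, M i ^ 2
      = ∑ i ∈ Finset.range (k.1 + 1), g i := by
    intro k
    refine Finset.sum_bij (fun (a : Fin N) _ => a.1) ?_ ?_ ?_ ?_
    · intro a ha
      simp only [Finset.mem_Iic] at ha
      simp only [Finset.mem_range]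
      omega
    · intro a₁ _ a₂ _ hval
      exact Fin.val_injective hval
    · intro b hb
      have hbN : b < N := lt_of_lt_of_le (Finset.mem_range.mp hb) (Nat.succ_le_of_lt k.2)
      exact ⟨⟨b, hbN⟩, Finset.mem_Iic.mpr (Nat.lt_succ_iff.mp (Finset.mem_range.mp hb)), rfl⟩
    · intro a _
      simp only [hgdef, dif_pos a.2]
  have huniv : ∑ k : Fin N, M k ^ 2 = ∑ i ∈ Finset.range N, g i := by
    rw [← Fin.sum_univ_eq_sum_range (fun i => g i) N]
    refine Finset.sum_congr rfl fun a _ => ?_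
    simp only [hgdef, dif_pos a.2]
  -- the last index has Iic = univ
  have hlast : ∑ i ∈ Finset.Iic (⟨N - 1, by omega⟩ : Fin N), M i ^ 2
      = ∑ i ∈ Finset.range N, g i := by
    rw [hIic]
    simp only [Fin.val_mk]
    rw [Nat.sub_add_cancel hN]
  have hApos : ∀ k : Fin N, 0 < ∑ i ∈ Finset.range (k.1 + 1), g i := by
    intro k
    refine Finset.sum_pos' (fun i _ => hg i) ⟨k.1, Finset.self_mem_range_succ _, hgpos _ k.2⟩
  have hANpos : (0:ℝ) < ∑ i ∈ Finset.range N, g i := by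
    have := hApos ⟨N - 1, by omega⟩
    simpa [Nat.sub_add_cancel hN] using this
  have hsqrtN : 0 < Real.sqrt (∑ i ∈ Finset.range N, g i) := Real.sqrt_pos.mpr hANpos
  -- first term
  have hterm1 : R ^ 2 / h ⟨N - 1, by omega⟩ = R * Real.sqrt (∑ i ∈ Finset.range N, g i) := by
    rw [hdef, hlast]
    field_simp
  -- second term
  have hterm2 : ∑ k : Fin N, h k * M k ^ 2 / 2
      ≤ R * Real.sqrt (∑ i ∈ Finset.range N, g i) := by
    have heq : ∑ k : Fin N, h k * M k ^ 2 / 2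
        = (R / 2) * ∑ k ∈ Finset.range N, g k / Real.sqrt (∑ i ∈ Finset.range (k + 1), g i) := by
      rw [Finset.mul_sum, ← Fin.sum_univ_eq_sum_range]
      refine Finset.sum_congr rfl fun k _ => ?_
      rw [hdef k, hIic k]
      have : g k.1 = M k ^ 2 := by simp only [hgdef, dif_pos k.2]
      rw [this]
      ring
    rw [heq]
    calc (R / 2) * ∑ k ∈ Finset.range N, g k / Real.sqrt (∑ i ∈ Finset.range (k + 1), g i)
        ≤ (R / 2) * (2 * Real.sqrt (∑ i ∈ Finset.range N, g i)) := by
          apply mul_le_mul_of_nonneg_left (adaptive_sum_le g hg N) (by linarith)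
      _ = R * Real.sqrt (∑ i ∈ Finset.range N, g i) := by ring
  rw [huniv, hterm1]
  linarith
end

section
/- For nonnegative reals a_1, ..., a_N, the inequality sqrt(∑_{k=1}^N a_k) + (1/2)·∑_{k=1}^N a_k / sqrt(∑_{i=1}^k a_i) ≤ 2·sqrt(∑_{k=1}^N a_k) holds (with the convention 0/0 = 0). -/
open Finset

lemma nat_adaptive_bound (b : ℕ → ℝ) (hb : ∀ k, 0 ≤ b k) (n : ℕ) :
    ∑ k ∈ range n, b k / Real.sqrt (∑ i ∈ range (k + 1), b i)
      ≤ 2 * Real.sqrt (∑ k ∈ range n, b k) := by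
  induction n with
  | zero => simp
  | succ n ih =>
    rw [Finset.sum_range_succ, Finset.sum_range_succ (f := b)]
    set s := ∑ i ∈ range n, b i with hs
    have hs0 : 0 ≤ s := Finset.sum_nonneg fun i _ => hb i
    have hbn : 0 ≤ b n := hb n
    have ht0 : 0 ≤ s + b n := by linarith
    rcases eq_or_lt_of_le ht0 with h | h
    · have hbz : b n = 0 := by
        have := hs0; nlinarith [hs0, hbn]
      simp only [hbz, zero_div, add_zero]
      linarith [ih]
    · have hst : Real.sqrt s ≤ Real.sqrt (s + b n) := Real.sqrt_le_sqrt (by linarith)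
      have hpos : 0 < Real.sqrt (s + b n) := Real.sqrt_pos.mpr h
      have key : b n / Real.sqrt (s + b n) ≤ 2 * (Real.sqrt (s + b n) - Real.sqrt s) := by
        rw [div_le_iff₀ hpos]
        have hsq : Real.sqrt (s + b n) * Real.sqrt (s + b n) = s + b n :=
          Real.mul_self_sqrt ht0
        have hsq2 : Real.sqrt s * Real.sqrt s = s := Real.mul_self_sqrt hs0
        nlinarith [Real.sqrt_nonneg s, Real.sqrt_nonneg (s + b n),
          mul_le_mul_of_nonneg_left hst (Real.sqrt_nonneg s)]
      linarith [ih]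

theorem combined_adaptive_bound (N : ℕ) (a : Fin N → ℝ) (ha : ∀ k, 0 ≤ a k) :
    Real.sqrt (∑ k : Fin N, a k)
      + (1 / 2) * ∑ k : Fin N, a k / Real.sqrt (∑ i ∈ Finset.Iic k, a i)
      ≤ 2 * Real.sqrt (∑ k : Fin N, a k) := by
  set b : ℕ → ℝ := fun i => if h : i < N then a ⟨i, h⟩ else 0 with hbdef
  have hb : ∀ k, 0 ≤ b k := by
    intro k; simp only [hbdef]; split <;> [exact ha _; exact le_rfl]
  have htot : ∑ k : Fin N, a k = ∑ k ∈ range N, b k := by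
    rw [Finset.sum_range fun i => b i]
    apply Finset.sum_congr rfl
    intro k _
    simp [hbdef, k.isLt]
  have hpart : ∀ k : Fin N, ∑ i ∈ Finset.Iic k, a i = ∑ i ∈ range (k.val + 1), b i := by
    intro k
    refine Finset.sum_bij' (fun i _ => i.val)
      (fun j hj => (⟨j, by simp [Nat.lt_succ_iff] at hj; omega⟩ : Fin N)) ?_ ?_ ?_ ?_ ?_
    · intro i hi
      have h1 : i ≤ k := Finset.mem_Iic.mp hi
      simp only [Finset.mem_range]
      exact Nat.lt_succ_of_le h1
    · intro j hj
      have : j < k.val + 1 := Finset.mem_range.mp hj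
      exact Finset.mem_Iic.mpr (Fin.mk_le_mk.mpr (by omega))
    · intro i _; rfl
    · intro j _; rfl
    · intro i hi; simp [hbdef]
  have hsum : ∑ k : Fin N, a k / Real.sqrt (∑ i ∈ Finset.Iic k, a i)
      = ∑ k ∈ range N, b k / Real.sqrt (∑ i ∈ range (k + 1), b i) := by
    rw [Finset.sum_range fun k => b k / Real.sqrt (∑ i ∈ range (k + 1), b i)]
    apply Finset.sum_congr rfl
    intro k _
    rw [hpart k]
    simp [hbdef, k.isLt]
  rw [htot, hsum]
  have := nat_adaptive_bound b hb N
  linarith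
end
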